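/- arXiv:2407.14408 — 2 statements merged into one kernel-verified Lean document; each statement's English description precedes it below -/
import Mathlib

section
/- Let a > 0 and ε ∈ (0, R₁]. If v : (0, ε] → ℝ is continuous and satisfies (a/2) t ≤ v(t) ≤ a t for all t ∈ (0, ε], then the function t ↦ h(t) f(v(t)) is integrable on (0, ε); in particular its integral over (0, t) is defined and continuous in t for t ∈ [0, ε]. -/
open Real Set Filter MeasureTheory

/-!
Under the change of variable `t = r^(2-N)` the weight `h` is at most a constant times `t^β` with
`β = (α - 2(N-1))/(N-2)`, while by (H2) and `v(t) ≥ a t / 2` the factor `f(v(t))` is at most a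
constant times `t^(-q)` plus a bound of `g₁` on a compact interval. The condition
`α > N + q(N-2)` is exactly `β - q > -1`, so `|h(t) f(v(t))|` is dominated by an integrable sum
of powers of `t` near `0`; integrability then gives continuity of the primitive.
-/

/-- The weight `h` of the equation `v'' + h(t) f(v) = 0` obtained from the radial equation
`Δu + K(|x|) f(u) = 0` by the change of variable `t = r^(2-n)`. -/
noncomputable def transformedWeight (n : ℝ) (K : ℝ → ℝ) (t : ℝ) : ℝ :=
  t ^ (2 * (n - 1) / (2 - n)) * K (t ^ (1 / (2 - n))) / (n - 2) ^ 2

section transformedWeight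

variable {n R : ℝ} {K : ℝ → ℝ} {t : ℝ}

lemma le_rpow_one_div_two_sub (hn : 2 < n) (hR : 0 < R) (ht : t ∈ Ioc 0 (R ^ (2 - n))) :
    R ≤ t ^ (1 / (2 - n)) := by
  have hexp : (2 - n) * (1 / (2 - n)) = 1 := by field_simp [show 2 - n ≠ 0 by linarith]
  calc R = (R ^ (2 - n)) ^ (1 / (2 - n)) := by rw [← rpow_mul hR.le, hexp, rpow_one]
    _ ≤ t ^ (1 / (2 - n)) :=
      rpow_le_rpow_of_nonpos ht.1 ht.2 (div_nonpos_of_nonneg_of_nonpos zero_le_one (by linarith))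

lemma transformedWeight_pos (hn : 2 < n) (hR : 0 < R) (hK : ∀ r, R ≤ r → 0 < K r)
    (ht : t ∈ Ioc 0 (R ^ (2 - n))) : 0 < transformedWeight n K t := by
  have hK_pos := hK _ (le_rpow_one_div_two_sub hn hR ht)
  have hpow_pos := rpow_pos_of_pos ht.1 (2 * (n - 1) / (2 - n))
  have hn_pos : 0 < n - 2 := by linarith
  unfold transformedWeight
  positivity

lemma transformedWeight_le {K₁ α : ℝ} (hn : 2 < n) (hR : 0 < R)
    (hK : ∀ r, R ≤ r → K r ≤ K₁ * r ^ (-α)) (ht : t ∈ Ioc 0 (R ^ (2 - n))) :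
    transformedWeight n K t ≤ K₁ / (n - 2) ^ 2 * t ^ ((α - 2 * (n - 1)) / (n - 2)) := by
  have hexp : 2 * (n - 1) / (2 - n) + 1 / (2 - n) * -α = (α - 2 * (n - 1)) / (n - 2) := by
    field_simp [show 2 - n ≠ 0 by linarith, show n - 2 ≠ 0 by linarith]
    ring
  have hpow : t ^ (2 * (n - 1) / (2 - n)) * (t ^ (1 / (2 - n))) ^ (-α) =
      t ^ ((α - 2 * (n - 1)) / (n - 2)) := by
    rw [← rpow_mul ht.1.le, ← rpow_add ht.1, hexp]
  calc transformedWeight n K t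
      ≤ t ^ (2 * (n - 1) / (2 - n)) * (K₁ * (t ^ (1 / (2 - n))) ^ (-α)) / (n - 2) ^ 2 := by
        unfold transformedWeight
        gcongr
        · exact (rpow_pos_of_pos ht.1 _).le
        · exact hK _ (le_rpow_one_div_two_sub hn hR ht)
    _ = K₁ / (n - 2) ^ 2 * t ^ ((α - 2 * (n - 1)) / (n - 2)) := by rw [← hpow]; ring

lemma continuousOn_transformedWeight (hn : 2 < n) (hR : 0 < R) (hK : ContinuousOn K (Ici R)) :
    ContinuousOn (transformedWeight n K) (Ioc 0 (R ^ (2 - n))) := by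
  have hpow (e : ℝ) : ContinuousOn (fun t : ℝ => t ^ e) (Ioc 0 (R ^ (2 - n))) :=
    continuousOn_id.rpow_const fun t ht => Or.inl ht.1.ne'
  exact ((hpow _).mul (hK.comp (hpow _) fun t ht => le_rpow_one_div_two_sub hn hR ht)).div_const _

end transformedWeight

lemma div_abs_rpow_eq_rpow_neg {u : ℝ} (hu : 0 < u) (q : ℝ) : u / |u| ^ (q + 1) = u ^ (-q) := by
  rw [abs_of_pos hu, rpow_add hu, rpow_one, rpow_neg hu.le]
  field_simp

lemma exists_abs_comp_le_rpow_neg_add {f g : ℝ → ℝ} {v : ℝ → ℝ} {s : Set ℝ} {b q U : ℝ}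
    (hq : 0 ≤ q) (hb : 0 < b) (hg : Continuous g) (hf : ∀ u, 0 < u → f u = u ^ (-q) + g u)
    (hs : s ⊆ Ioi 0) (hv : ∀ t ∈ s, b * t ≤ v t ∧ v t ≤ U) :
    ∃ M, ∀ t ∈ s, |f (v t)| ≤ b ^ (-q) * t ^ (-q) + M := by
  obtain ⟨M, hM⟩ := (isCompact_Icc (a := 0) (b := U)).exists_bound_of_continuousOn
    hg.continuousOn
  refine ⟨M, fun t ht => ?_⟩
  have hbt : 0 < b * t := mul_pos hb (hs ht)
  have hvt : 0 < v t := hbt.trans_le (hv t ht).1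
  calc |f (v t)| ≤ |v t ^ (-q)| + |g (v t)| := by rw [hf _ hvt]; exact abs_add_le _ _
    _ ≤ (b * t) ^ (-q) + M := by
      gcongr
      · rw [abs_of_nonneg (rpow_nonneg hvt.le _)]
        exact rpow_le_rpow_of_nonpos hbt (hv t ht).1 (neg_nonpos.2 hq)
      · exact hM _ ⟨hvt.le, (hv t ht).2⟩
    _ = b ^ (-q) * t ^ (-q) + M := by rw [mul_rpow hb.le (hs ht).le]

lemma integrableOn_Ioo_mul_of_rpow_bounds {w F : ℝ → ℝ} {ε β q C A M : ℝ} (hε : 0 < ε)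
    (hq : 0 ≤ q) (hβ : q - 1 < β) (hw : ContinuousOn w (Ioo 0 ε)) (hF : ContinuousOn F (Ioo 0 ε))
    (hw_bd : ∀ t ∈ Ioo 0 ε, 0 ≤ w t ∧ w t ≤ C * t ^ β)
    (hF_bd : ∀ t ∈ Ioo 0 ε, |F t| ≤ A * t ^ (-q) + M) :
    IntegrableOn (fun t => w t * F t) (Ioo 0 ε) := by
  have hpow {r : ℝ} (hr : -1 < r) : IntegrableOn (fun t : ℝ => t ^ r) (Ioo 0 ε) :=
    (intervalIntegral.integrableOn_Ioo_rpow_iff hε).2 hr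
  refine Integrable.mono' (((hpow (r := β - q) (by linarith)).const_mul (C * A)).add
    ((hpow (r := β) (by linarith)).const_mul (C * M)))
    ((hw.mul hF).aestronglyMeasurable measurableSet_Ioo) ?_
  refine (ae_restrict_iff' measurableSet_Ioo).2 (Eventually.of_forall fun t ht => ?_)
  obtain ⟨hw0, hwC⟩ := hw_bd t ht
  calc ‖w t * F t‖ = w t * |F t| := by rw [norm_mul, norm_of_nonneg hw0, norm_eq_abs]
    _ ≤ C * t ^ β * (A * t ^ (-q) + M) := mul_le_mul hwC (hF_bd t ht) (abs_nonneg _) (hw0.trans hwC)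
    _ = C * A * t ^ (β - q) + C * M * t ^ β := by
      rw [rpow_sub ht.1, rpow_neg ht.1.le]
      ring

lemma continuousOn_setIntegral_Ioo_of_integrableOn {F : ℝ → ℝ} {a b : ℝ}
    (hF : IntegrableOn F (Ioo a b)) :
    ContinuousOn (fun t => ∫ s in Ioo a t, F s) (Icc a b) :=
  (intervalIntegral.continuousOn_primitive (hF.congr_set_ae Ioo_ae_eq_Icc.symm)).congr
    fun _ _ => setIntegral_congr_set Ioo_ae_eq_Ioc

theorem stmt_5_general
    (N : ℕ) (hN : 2 < N)
    (R R₁ : ℝ) (hR : 0 < R) (hR₁ : R₁ = R ^ ((2 : ℝ) - N))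
    (f g₁ : ℝ → ℝ) (q : ℝ) (hq0 : 0 < q)
    (hH2 : ∀ u : ℝ, u ≠ 0 → f u = u / |u| ^ (q + 1) + g₁ u)
    (hg1lip : LocallyLipschitz g₁)
    (K : ℝ → ℝ) (K₁ α : ℝ)
    (hα₁ : (N : ℝ) + q * ((N : ℝ) - 2) < α)
    (hKpos : ∀ r : ℝ, R ≤ r → 0 < K r)
    (hKdiff : ∀ r : ℝ, R ≤ r → DifferentiableAt ℝ K r)
    (hKub : ∀ r : ℝ, R ≤ r → K r ≤ K₁ * r ^ (-α))
    (h : ℝ → ℝ)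
    (hh : ∀ t : ℝ, t ∈ Ioc (0 : ℝ) R₁ →
      h t = t ^ (2 * ((N : ℝ) - 1) / (2 - (N : ℝ))) * K (t ^ (1 / (2 - (N : ℝ)))) / ((N : ℝ) - 2) ^ 2)
    (a ε : ℝ) (ha : 0 < a) (hε0 : 0 < ε) (hεR : ε ≤ R₁)
    (v : ℝ → ℝ) (hvcont : ContinuousOn v (Ioc 0 ε))
    (hvbd : ∀ t ∈ Ioc (0 : ℝ) ε, a / 2 * t ≤ v t ∧ v t ≤ a * t) :
    IntegrableOn (fun t => h t * f (v t)) (Ioo 0 ε) ∧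
      ContinuousOn (fun t => ∫ s in Ioo (0 : ℝ) t, h s * f (v s)) (Icc 0 ε) := by
  subst hR₁
  have hn : (2 : ℝ) < N := by exact_mod_cast hN
  have hβ : q - 1 < (α - 2 * ((N : ℝ) - 1)) / ((N : ℝ) - 2) := by
    rw [lt_div_iff₀ (by linarith)]
    linarith
  have hsub : Ioo 0 ε ⊆ Ioc 0 (R ^ ((2 : ℝ) - N)) := fun t ht => ⟨ht.1, ht.2.le.trans hεR⟩
  have hv : ∀ t ∈ Ioo 0 ε, a / 2 * t ≤ v t ∧ v t ≤ a * ε := fun t ht =>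
    have hvt := hvbd t (Ioo_subset_Ioc_self ht)
    ⟨hvt.1, hvt.2.trans (mul_le_mul_of_nonneg_left ht.2.le ha.le)⟩
  have hf : ∀ u, 0 < u → f u = u ^ (-q) + g₁ u := fun u hu => by
    rw [hH2 u hu.ne', div_abs_rpow_eq_rpow_neg hu]
  have hfv : ContinuousOn (fun t => f (v t)) (Ioo 0 ε) := by
    have hf_cont : ContinuousOn f (Ioi 0) :=
      ((continuousOn_id.rpow_const fun u hu => Or.inl (ne_of_gt hu)).add
        hg1lip.continuous.continuousOn).congr hf
    exact hf_cont.comp (hvcont.mono Ioo_subset_Ioc_self) fun t ht =>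
      (mul_pos (half_pos ha) ht.1).trans_le (hv t ht).1
  obtain ⟨M, hM⟩ := exists_abs_comp_le_rpow_neg_add hq0.le (half_pos ha) hg1lip.continuous hf
    Ioo_subset_Ioi_self hv
  have hint : IntegrableOn (fun t => h t * f (v t)) (Ioo 0 ε) := by
    refine integrableOn_Ioo_mul_of_rpow_bounds (C := K₁ / ((N : ℝ) - 2) ^ 2) hε0 hq0.le hβ ?_ hfv
      ?_ hM
    · exact ((continuousOn_transformedWeight hn hR fun r hr =>
        (hKdiff r hr).continuousAt.continuousWithinAt).mono hsub).congr fun t ht => hh t (hsub ht)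
    · intro t ht
      rw [hh t (hsub ht)]
      exact ⟨(transformedWeight_pos hn hR hKpos (hsub ht)).le,
        transformedWeight_le hn hR hKub (hsub ht)⟩
  exact ⟨hint, continuousOn_setIntegral_Ioo_of_integrableOn hint⟩

theorem stmt_5
    (N : ℕ) (hN : 2 < N)
    (R R₁ : ℝ) (hR : 0 < R) (hR₁ : R₁ = R ^ ((2 : ℝ) - N))
    (f g g₁ : ℝ → ℝ) (p q : ℝ) (hp : 1 < p) (hq0 : 0 < q) (hq1 : q < 1)
    (hodd : ∀ u : ℝ, f (-u) = - f u)
    (hfloclip : ∀ x : ℝ, x ≠ 0 → ∃ ε > (0 : ℝ), ∃ L : NNReal, LipschitzOnWith L f (Metric.ball x ε))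
    (hH1 : ∀ u : ℝ, u ≠ 0 → f u = |u| ^ (p - 1) * u + g u)
    (hglim : ∀ ε : ℝ, 0 < ε → ∃ M : ℝ, 0 < M ∧ ∀ u : ℝ, M ≤ |u| → |g u / |u| ^ p| ≤ ε)
    (hH2 : ∀ u : ℝ, u ≠ 0 → f u = u / |u| ^ (q + 1) + g₁ u)
    (hg1lip : LocallyLipschitz g₁) (hg10 : g₁ 0 = 0)
    (hfpos : ∀ w : ℝ, 0 < w → 0 < f w)
    (K : ℝ → ℝ) (K₀ K₁ α : ℝ) (hK₀ : 0 < K₀) (hK₁ : 0 < K₁)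
    (hα₁ : (N : ℝ) + q * ((N : ℝ) - 2) < α) (hα₂ : α < 2 * ((N : ℝ) - 1))
    (hKpos : ∀ r : ℝ, R ≤ r → 0 < K r)
    (hKdiff : ∀ r : ℝ, R ≤ r → DifferentiableAt ℝ K r)
    (hK'cont : ContinuousOn (deriv K) (Ici R))
    (hKlb : ∀ r : ℝ, R ≤ r → K₀ * r ^ (-α) ≤ K r)
    (hKub : ∀ r : ℝ, R ≤ r → K r ≤ K₁ * r ^ (-α))
    (hKratio : ∀ r : ℝ, R ≤ r → -(r * deriv K r / K r) < 2 * ((N : ℝ) - 1))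
    (hKlim : Tendsto (fun r => r * deriv K r / K r) atTop (nhds (-α)))
    (h : ℝ → ℝ)
    (hh : ∀ t : ℝ, t ∈ Ioc (0 : ℝ) R₁ →
      h t = t ^ (2 * ((N : ℝ) - 1) / (2 - (N : ℝ))) * K (t ^ (1 / (2 - (N : ℝ)))) / ((N : ℝ) - 2) ^ 2)
    (a ε : ℝ) (ha : 0 < a) (hε0 : 0 < ε) (hεR : ε ≤ R₁)
    (v : ℝ → ℝ) (hvcont : ContinuousOn v (Ioc 0 ε))
    (hvbd : ∀ t ∈ Ioc (0 : ℝ) ε, a / 2 * t ≤ v t ∧ v t ≤ a * t) :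
    IntegrableOn (fun t => h t * f (v t)) (Ioo 0 ε) ∧
      ContinuousOn (fun t => ∫ s in Ioo (0 : ℝ) t, h s * f (v s)) (Icc 0 ε) :=
  stmt_5_general N hN R R₁ hR hR₁ f g₁ q hq0 hH2 hg1lip K K₁ α hα₁ hKpos hKdiff hKub h hh a ε ha hε0
    hεR v hvcont hvbd
end

section
/- Under hypothesis (H1), F is superquadratic at infinity in the sense that u/√(F(u)) → 0 as u → ∞; moreover, for any sequence M_k → ∞, ∫₀¹ (1 − F(M_k s)/F(M_k))^{-1/2} ds → ∫₀¹ (1 − s^{p+1})^{-1/2} ds as k → ∞. -/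
/-
Under (H1), `f u - u ^ p = o(u ^ p)`, so integrating gives `F u ~ u ^ (p + 1) / (p + 1)`; this
yields `u / √(F u) → 0` because `p > 1`, and `F (M s) / F M → s ^ (p + 1)` pointwise. To pass
to the limit under the integral, (H1) also gives `f ≥ u ^ p / 2` for large `u`, and together with
`f > 0` this bounds `1 - F (M s) / F M` below by a multiple of `1 - s` uniformly for large `M`;
hence the integrands are dominated by a multiple of `(1 - s) ^ (-1/2)`.
-/

open Real Set Filter MeasureTheory Topology Asymptotics intervalIntegral
open scoped Interval

theorem intervalIntegrable_abs_rpow {r : ℝ} (hr : -1 < r) (a b : ℝ) :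
    IntervalIntegrable (fun x : ℝ => |x| ^ r) volume a b := by
  have hnonneg : ∀ c : ℝ, 0 ≤ c → IntervalIntegrable (fun x : ℝ => |x| ^ r) volume 0 c :=
    fun c hc => (intervalIntegrable_rpow' hr).congr fun x hx => by
      rw [uIoc_of_le hc] at hx
      simp only [abs_of_pos hx.1]
  have hzero : ∀ c : ℝ, IntervalIntegrable (fun x : ℝ => |x| ^ r) volume 0 c := by
    intro c
    rcases le_total 0 c with hc | hc
    · exact hnonneg c hc
    · rw [IntervalIntegrable.iff_comp_neg, neg_zero]
      simpa only [abs_neg] using hnonneg (-c) (by linarith)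
  exact (hzero a).symm.trans (hzero b)

theorem intervalIntegrable_of_eq_div_abs_rpow_add {f g₁ : ℝ → ℝ} {q : ℝ} (hq : q < 1)
    (hg₁ : Continuous g₁) (hf : ∀ u : ℝ, u ≠ 0 → f u = u / |u| ^ (q + 1) + g₁ u) (a b : ℝ) :
    IntervalIntegrable f volume a b := by
  have hnorm : ∀ x : ℝ, ‖x / |x| ^ (q + 1)‖ ≤ ‖|x| ^ (-q)‖ := by
    intro x
    rcases eq_or_ne x 0 with rfl | hx
    · simp
    · have hx' : 0 < |x| := abs_pos.mpr hx
      rw [norm_div, Real.norm_eq_abs, Real.norm_eq_abs, Real.norm_eq_abs,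
        abs_of_pos (rpow_pos_of_pos hx' _), abs_of_pos (rpow_pos_of_pos hx' _),
        show -q = 1 - (q + 1) by ring, rpow_sub hx', rpow_one]
  have hsingular : IntervalIntegrable (fun x : ℝ => x / |x| ^ (q + 1)) volume a b :=
    (intervalIntegrable_abs_rpow (by linarith) a b).mono_fun
      (by fun_prop : Measurable fun x : ℝ => x / |x| ^ (q + 1)).aestronglyMeasurable
      (ae_of_all _ hnorm)
  refine (hsingular.add (hg₁.intervalIntegrable a b)).congr_ae ?_
  filter_upwards [ae_restrict_of_ae (volume.ae_ne 0)] with x hx using (hf x hx).symm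

theorem isLittleO_sub_rpow_of_eq_abs_rpow_mul_add {f g : ℝ → ℝ} {p : ℝ}
    (hf : ∀ u : ℝ, u ≠ 0 → f u = |u| ^ (p - 1) * u + g u)
    (hg : ∀ ε : ℝ, 0 < ε → ∃ M : ℝ, 0 < M ∧ ∀ u : ℝ, M ≤ |u| → |g u / |u| ^ p| ≤ ε) :
    (fun u => f u - u ^ p) =o[atTop] (fun u => u ^ p) := by
  rw [isLittleO_iff]
  intro ε hε
  obtain ⟨M, hM, hgM⟩ := hg ε hε
  filter_upwards [eventually_ge_atTop M] with u hu
  have hu0 : 0 < u := hM.trans_le hu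
  have hup : 0 < u ^ p := rpow_pos_of_pos hu0 p
  have hgu := hgM u (by rwa [abs_of_pos hu0])
  rw [abs_of_pos hu0, abs_div, abs_of_pos hup, div_le_iff₀ hup] at hgu
  rw [hf u hu0.ne', abs_of_pos hu0, rpow_sub_one hu0.ne', div_mul_cancel₀ _ hu0.ne',
    add_sub_cancel_left, Real.norm_eq_abs, Real.norm_eq_abs, abs_of_pos hup]
  exact hgu

theorem isLittleO_integral_of_isLittleO_rpow {h : ℝ → ℝ} {p : ℝ} (hp : -1 < p)
    (hh : ∀ a b : ℝ, IntervalIntegrable h volume a b) (ho : h =o[atTop] (fun u => u ^ p)) :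
    (fun u => ∫ s in (0 : ℝ)..u, h s) =o[atTop] (fun u => u ^ (p + 1)) := by
  have hp1 : 0 < p + 1 := by linarith
  rw [isLittleO_iff]
  intro c hc
  obtain ⟨M, hM⟩ := eventually_atTop.1 (ho.bound (by positivity : 0 < c * (p + 1) / 2))
  set M' := max M 1
  have hM'0 : 0 < M' := lt_of_lt_of_le one_pos (le_max_right _ _)
  filter_upwards [eventually_ge_atTop M',
    (tendsto_rpow_atTop hp1).eventually_ge_atTop (2 * ‖∫ s in (0 : ℝ)..M', h s‖ / c)]
    with u hu hbig
  have hu0 : 0 < u := hM'0.trans_le hu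
  have htail : ‖∫ s in M'..u, h s‖ ≤ c / 2 * u ^ (p + 1) := by
    calc ‖∫ s in M'..u, h s‖ ≤ ∫ s in M'..u, c * (p + 1) / 2 * s ^ p := by
          refine norm_integral_le_of_norm_le hu (ae_of_all _ fun s hs => ?_)
            ((intervalIntegrable_rpow' hp).const_mul _)
          have hs0 : 0 < s := hM'0.trans hs.1
          simpa [Real.norm_eq_abs, abs_of_pos (rpow_pos_of_pos hs0 p)] using
            hM s ((le_max_left _ _).trans hs.1.le)
      _ = c / 2 * (u ^ (p + 1) - M' ^ (p + 1)) := by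
          rw [intervalIntegral.integral_const_mul, integral_rpow (Or.inl hp)]
          field_simp
      _ ≤ c / 2 * u ^ (p + 1) := by
          have := rpow_nonneg hM'0.le (p + 1)
          gcongr
          linarith
  have hhead : ‖∫ s in (0 : ℝ)..M', h s‖ ≤ c / 2 * u ^ (p + 1) := by
    rw [div_le_iff₀ hc] at hbig
    linarith
  rw [← integral_add_adjacent_intervals (hh 0 M') (hh M' u), Real.norm_eq_abs (u ^ (p + 1)),
    abs_of_pos (rpow_pos_of_pos hu0 _)]
  calc ‖(∫ s in (0 : ℝ)..M', h s) + ∫ s in M'..u, h s‖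
      ≤ ‖∫ s in (0 : ℝ)..M', h s‖ + ‖∫ s in M'..u, h s‖ := norm_add_le _ _
    _ ≤ c * u ^ (p + 1) := by linarith

theorem tendsto_integral_div_rpow {f : ℝ → ℝ} {p : ℝ} (hp : -1 < p)
    (hf : ∀ a b : ℝ, IntervalIntegrable f volume a b)
    (ho : (fun u => f u - u ^ p) =o[atTop] (fun u => u ^ p)) :
    Tendsto (fun u => (∫ s in (0 : ℝ)..u, f s) / u ^ (p + 1)) atTop (𝓝 (p + 1)⁻¹) := by
  have hp1 : p + 1 ≠ 0 := by linarith
  have hpow : ∀ a b : ℝ, IntervalIntegrable (fun s : ℝ => s ^ p) volume a b :=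
    fun _ _ => intervalIntegrable_rpow' hp
  have herr := (isLittleO_integral_of_isLittleO_rpow hp (fun a b => (hf a b).sub (hpow a b))
    ho).tendsto_div_nhds_zero.const_add (p + 1)⁻¹
  rw [add_zero] at herr
  refine herr.congr' ?_
  filter_upwards [eventually_gt_atTop 0] with u hu
  rw [integral_sub (hf 0 u) (hpow 0 u), integral_rpow (Or.inl hp), zero_rpow hp1]
  field_simp [(rpow_pos_of_pos hu (p + 1)).ne']
  ring

theorem tendsto_div_sqrt_of_tendsto_div_rpow {F : ℝ → ℝ} {p L : ℝ} (hp : 1 < p) (hL : L ≠ 0)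
    (hF : Tendsto (fun u => F u / u ^ (p + 1)) atTop (𝓝 L)) :
    Tendsto (fun u => u / √(F u)) atTop (𝓝 0) := by
  have hsq : Tendsto (fun u => u ^ (-(p - 1)) * (F u / u ^ (p + 1))⁻¹) atTop (𝓝 0) := by
    simpa using (tendsto_rpow_neg_atTop (by linarith : 0 < p - 1)).mul (hF.inv₀ hL)
  have hsqrt := hsq.sqrt
  rw [sqrt_zero] at hsqrt
  refine hsqrt.congr' ?_
  filter_upwards [eventually_gt_atTop 0] with u hu
  rw [inv_div, ← mul_div_assoc, ← rpow_add hu, show -(p - 1) + (p + 1) = (2 : ℝ) by ring,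
    rpow_two, sqrt_div (sq_nonneg u), sqrt_sq hu.le]

theorem tendsto_comp_mul_div_of_tendsto_div_rpow {F : ℝ → ℝ} {r L s : ℝ} (hL : L ≠ 0)
    (hF : Tendsto (fun u => F u / u ^ r) atTop (𝓝 L)) (hs : 0 < s) :
    Tendsto (fun u => F (u * s) / F u) atTop (𝓝 (s ^ r)) := by
  have hprod := ((hF.comp (tendsto_id.atTop_mul_const hs)).mul (hF.inv₀ hL)).mul_const (s ^ r)
  rw [mul_inv_cancel₀ hL, one_mul] at hprod
  refine hprod.congr' ?_
  filter_upwards [eventually_gt_atTop 0] with u hu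
  have hur := (rpow_pos_of_pos hu r).ne'
  have hsr := (rpow_pos_of_pos hs r).ne'
  simp only [Function.comp_apply, id, mul_rpow hu.le hs.le]
  rw [inv_div]
  field_simp

theorem monotoneOn_primitive_of_nonneg {f : ℝ → ℝ}
    (hf : ∀ a b : ℝ, IntervalIntegrable f volume a b) (hf0 : ∀ x : ℝ, 0 < x → 0 ≤ f x) :
    MonotoneOn (fun u => ∫ s in (0 : ℝ)..u, f s) (Ici 0) := by
  intro a ha b _ hab
  rw [← sub_nonneg, integral_interval_sub_left (hf 0 b) (hf 0 a)]
  refine integral_nonneg_of_ae_restrict hab ?_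
  filter_upwards [ae_restrict_mem measurableSet_Icc, ae_restrict_of_ae (volume.ae_ne 0)]
    with x hx hx0
  exact hf0 x (lt_of_le_of_ne (le_trans (mem_Ici.mp ha) hx.1) hx0.symm)

theorem eventually_mul_one_sub_le_integral_sub {f : ℝ → ℝ} {p : ℝ} (hp : 0 ≤ p)
    (hf : ∀ a b : ℝ, IntervalIntegrable f volume a b) (hf0 : ∀ x : ℝ, 0 < x → 0 ≤ f x)
    (ho : (fun u => f u - u ^ p) =o[atTop] (fun u => u ^ p)) :
    ∀ᶠ u in atTop, ∀ t ∈ Icc (0 : ℝ) 1,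
      (1 / 2) ^ p / 4 * u ^ (p + 1) * (1 - t) ≤
        (∫ s in (0 : ℝ)..u, f s) - ∫ s in (0 : ℝ)..u * t, f s := by
  obtain ⟨M, hM⟩ := eventually_atTop.1 (ho.bound (by norm_num : (0 : ℝ) < 1 / 2))
  have hflow : ∀ x, max M 1 ≤ x → x ^ p / 2 ≤ f x := by
    intro x hx
    have hxp : 0 < x ^ p := rpow_pos_of_pos (one_pos.trans_le ((le_max_right _ _).trans hx)) p
    have := hM x ((le_max_left _ _).trans hx)
    rw [Real.norm_eq_abs, Real.norm_eq_abs, abs_of_pos hxp] at this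
    linarith [(abs_le.mp this).1]
  filter_upwards [eventually_ge_atTop (2 * max M 1)] with u hu t ht
  have hM1 : 1 ≤ max M 1 := le_max_right _ _
  have hu0 : 0 < u := by linarith
  set a := max (u * t) (u / 2)
  -- The integral over `[u t, u]` is bounded below by the one over `[max (u t) (u / 2), u]`,
  -- where `f ≥ (u / 2) ^ p / 2`.
  have hmono : ∫ s in (0 : ℝ)..u * t, f s ≤ ∫ s in (0 : ℝ)..a, f s :=
    monotoneOn_primitive_of_nonneg hf hf0 (mem_Ici.mpr (mul_nonneg hu0.le ht.1))
      (mem_Ici.mpr (by positivity)) (le_max_left _ _)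
  have hau : a ≤ u := max_le (by nlinarith [ht.2]) (by linarith)
  have hgap : u * (1 - t) / 2 ≤ u - a := by
    rw [le_sub_comm]
    refine max_le ?_ ?_ <;> nlinarith [ht.1, ht.2]
  have htail :
      (u / 2) ^ p / 2 * (u - a) ≤ (∫ s in (0 : ℝ)..u, f s) - ∫ s in (0 : ℝ)..a, f s := by
    rw [integral_interval_sub_left (hf 0 u) (hf 0 a)]
    have := integral_mono_on hau intervalIntegrable_const (hf a u) fun x hx =>
      (div_le_div_of_nonneg_right
        (rpow_le_rpow (by positivity) ((le_max_right _ _).trans hx.1) hp) zero_le_two).trans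
        (hflow x (by linarith [le_max_right (u * t) (u / 2), hx.1]))
    rw [intervalIntegral.integral_const, smul_eq_mul] at this
    linarith
  have hconst :
      (1 / 2) ^ p / 4 * u ^ (p + 1) * (1 - t) = (u / 2) ^ p / 2 * (u * (1 - t) / 2) := by
    rw [div_eq_mul_one_div u 2, mul_rpow hu0.le (by norm_num), rpow_add_one hu0.ne']
    ring
  rw [hconst]
  calc (u / 2) ^ p / 2 * (u * (1 - t) / 2) ≤ (u / 2) ^ p / 2 * (u - a) := by gcongr
    _ ≤ _ := htail
    _ ≤ _ := by linarith

theorem exists_mul_one_sub_le_one_sub_div {F : ℝ → ℝ} {r c L : ℝ} (hc : 0 < c) (hL : 0 < L)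
    (hF : Tendsto (fun u => F u / u ^ r) atTop (𝓝 L))
    (hinc : ∀ᶠ u in atTop, ∀ t ∈ Icc (0 : ℝ) 1, c * u ^ r * (1 - t) ≤ F u - F (u * t)) :
    ∃ κ > 0, ∀ᶠ u in atTop, ∀ t ∈ Icc (0 : ℝ) 1, κ * (1 - t) ≤ 1 - F (u * t) / F u := by
  refine ⟨c / (2 * L), by positivity, ?_⟩
  filter_upwards [hinc, hF.eventually (Ioo_mem_nhds (by positivity) (by linarith : L < 2 * L)),
    eventually_gt_atTop 0] with u hu hratio hu0 t ht
  have hur : 0 < u ^ r := rpow_pos_of_pos hu0 r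
  have hFu : 0 < F u := by simpa [div_pos_iff_of_pos_right hur] using hratio.1
  have hFle : F u ≤ 2 * L * u ^ r := by
    have := hratio.2.le
    rwa [div_le_iff₀ hur] at this
  have h1t : 0 ≤ 1 - t := by linarith [ht.2]
  rw [one_sub_div hFu.ne', le_div_iff₀ hFu]
  calc c / (2 * L) * (1 - t) * F u ≤ c / (2 * L) * (1 - t) * (2 * L * u ^ r) := by gcongr
    _ = c * u ^ r * (1 - t) := by field_simp
    _ ≤ F u - F (u * t) := hu t ht

theorem tendsto_integral_one_div_sqrt_one_sub_div {F : ℝ → ℝ} {M : ℕ → ℝ} {r L κ : ℝ}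
    (hFc : Continuous F) (hL : L ≠ 0)
    (hF : Tendsto (fun u => F u / u ^ r) atTop (𝓝 L)) (hκ : 0 < κ)
    (hdom : ∀ᶠ u in atTop, ∀ t ∈ Icc (0 : ℝ) 1, κ * (1 - t) ≤ 1 - F (u * t) / F u)
    (hM : Tendsto M atTop atTop) (hr : 0 < r) :
    Tendsto (fun k => ∫ s in (0 : ℝ)..1, 1 / √(1 - F (M k * s) / F (M k))) atTop
      (𝓝 (∫ s in (0 : ℝ)..1, 1 / √(1 - s ^ r))) := by
  have hIoo : ∀ᵐ s ∂volume, s ∈ Ι (0 : ℝ) 1 → s ∈ Ioo (0 : ℝ) 1 := by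
    filter_upwards [volume.ae_ne 1] with s hs hmem
    rw [uIoc_of_le zero_le_one] at hmem
    exact ⟨hmem.1, lt_of_le_of_ne hmem.2 hs⟩
  refine tendsto_integral_filter_of_dominated_convergence
    (fun s => κ ^ (-(1 / 2) : ℝ) * (1 - s) ^ (-(1 / 2) : ℝ)) ?_ ?_ ?_ ?_
  · exact Eventually.of_forall fun k =>
      (by fun_prop : Measurable fun s => 1 / √(1 - F (M k * s) / F (M k))).aestronglyMeasurable
  · filter_upwards [hM.eventually hdom] with k hk
    filter_upwards [hIoo] with s hs hmem
    have hs := hs hmem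
    have hlow : 0 < κ * (1 - s) := mul_pos hκ (by linarith [hs.2])
    have hk := hk s (Ioo_subset_Icc_self hs)
    rw [norm_div, norm_one, Real.norm_eq_abs, abs_of_nonneg (sqrt_nonneg _), sqrt_eq_rpow,
      one_div, ← rpow_neg (hlow.le.trans hk), ← mul_rpow hκ.le (by linarith [hs.2])]
    exact rpow_le_rpow_of_nonpos hlow hk (by norm_num)
  · have := ((intervalIntegrable_rpow' (a := 0) (b := 1) (by norm_num : (-1 : ℝ) < -(1 / 2))
      ).comp_sub_left 1).symm.const_mul (κ ^ (-(1 / 2) : ℝ))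
    simpa only [sub_zero, sub_self] using this
  · filter_upwards [hIoo] with s hs hmem
    have hs := hs hmem
    have hsr : 0 < 1 - s ^ r := sub_pos.mpr (rpow_lt_one hs.1.le hs.2 hr)
    have hratio := (tendsto_comp_mul_div_of_tendsto_div_rpow hL hF hs.1).comp hM
    exact tendsto_const_nhds.div (tendsto_const_nhds.sub hratio).sqrt (sqrt_ne_zero'.mpr hsr)

theorem stmt_18_general
    (f g g₁ : ℝ → ℝ) (p q : ℝ) (hp : 1 < p) (hq1 : q < 1)
    (hH1 : ∀ u : ℝ, u ≠ 0 → f u = |u| ^ (p - 1) * u + g u)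
    (hglim : ∀ ε : ℝ, 0 < ε → ∃ M : ℝ, 0 < M ∧ ∀ u : ℝ, M ≤ |u| → |g u / |u| ^ p| ≤ ε)
    (hH2 : ∀ u : ℝ, u ≠ 0 → f u = u / |u| ^ (q + 1) + g₁ u)
    (hg1lip : LocallyLipschitz g₁)
    (hfpos : ∀ w : ℝ, 0 < w → 0 < f w)
    (F : ℝ → ℝ) (hF : ∀ u : ℝ, F u = ∫ s in (0 : ℝ)..u, f s)
    :
    Tendsto (fun u => u / Real.sqrt (F u)) atTop (nhds 0) ∧
      ∀ M : ℕ → ℝ, Tendsto M atTop atTop →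
        Tendsto (fun k => ∫ s in (0 : ℝ)..1, 1 / Real.sqrt (1 - F (M k * s) / F (M k)))
          atTop (nhds (∫ s in (0 : ℝ)..1, 1 / Real.sqrt (1 - s ^ (p + 1)))) := by
  obtain rfl : F = fun u => ∫ s in (0 : ℝ)..u, f s := funext hF
  set F := fun u => ∫ s in (0 : ℝ)..u, f s
  have hf := intervalIntegrable_of_eq_div_abs_rpow_add hq1 hg1lip.continuous hH2
  have ho := isLittleO_sub_rpow_of_eq_abs_rpow_mul_add hH1 hglim
  have hlim := tendsto_integral_div_rpow (by linarith) hf ho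
  have hL : (0 : ℝ) < (p + 1)⁻¹ := by positivity
  refine ⟨tendsto_div_sqrt_of_tendsto_div_rpow hp hL.ne' hlim, fun M hM => ?_⟩
  obtain ⟨κ, hκ, hdom⟩ :=
    exists_mul_one_sub_le_one_sub_div (F := F) (by positivity) hL hlim
    (eventually_mul_one_sub_le_integral_sub (by linarith) hf (fun x hx => (hfpos x hx).le) ho)
  exact tendsto_integral_one_div_sqrt_one_sub_div (continuous_primitive hf 0) hL.ne' hlim hκ hdom
    hM (by linarith)

theorem stmt_18
    (f g g₁ : ℝ → ℝ) (p q : ℝ) (hp : 1 < p) (hq0 : 0 < q) (hq1 : q < 1)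
    (hodd : ∀ u : ℝ, f (-u) = - f u)
    (hfloclip : ∀ x : ℝ, x ≠ 0 → ∃ ε > (0 : ℝ), ∃ L : NNReal, LipschitzOnWith L f (Metric.ball x ε))
    (hH1 : ∀ u : ℝ, u ≠ 0 → f u = |u| ^ (p - 1) * u + g u)
    (hglim : ∀ ε : ℝ, 0 < ε → ∃ M : ℝ, 0 < M ∧ ∀ u : ℝ, M ≤ |u| → |g u / |u| ^ p| ≤ ε)
    (hH2 : ∀ u : ℝ, u ≠ 0 → f u = u / |u| ^ (q + 1) + g₁ u)
    (hg1lip : LocallyLipschitz g₁) (hg10 : g₁ 0 = 0)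
    (hfpos : ∀ w : ℝ, 0 < w → 0 < f w)
    (F : ℝ → ℝ) (hF : ∀ u : ℝ, F u = ∫ s in (0 : ℝ)..u, f s)
    :
    Tendsto (fun u => u / Real.sqrt (F u)) atTop (nhds 0) ∧
      ∀ M : ℕ → ℝ, Tendsto M atTop atTop →
        Tendsto (fun k => ∫ s in (0 : ℝ)..1, 1 / Real.sqrt (1 - F (M k * s) / F (M k)))
          atTop (nhds (∫ s in (0 : ℝ)..1, 1 / Real.sqrt (1 - s ^ (p + 1)))) :=
  stmt_18_general f g g₁ p q hp hq1 hH1 hglim hH2 hg1lip hfpos F hF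
end
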